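/- arXiv:2307.00585 — 3 statements merged into one kernel-verified Lean document; each statement's English description precedes it below -/
import Mathlib

section
/- Assume hypothesis (B1) and α ≥ p − 1. Then for every R > 0 there is no non-constant positive radial solution on B_R of the system Δ_p u = f₁(|x|)·g₁(v)·|∇u|^α, Δ_p v = f₂(|x|)·g₂(v)·g₃(|∇u|). -/
/-!
Integrating the first equation from `0` gives
`r^{n-1} u'|u'|^{p-2} (r) = ∫₀ʳ s^{n-1} f₁(s) g₁(v(s)) |u'(s)|^α ds`.
On a compact interval `[0, b] ⊂ [0, R)` the coefficient `f₁ g₁(v)` is bounded by some `M` and `|u'|`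
by some `W`; since `α ≥ p - 1`, `|u'|^α ≤ W^{α-(p-1)} |u'|^{p-1}`, and bounding `s^{n-1} ≤ r^{n-1}`
shows that `h = |u'|^{p-1}` satisfies `h(r) ≤ K ∫₀ʳ h`. Grönwall's inequality forces `h ≡ 0`,
so `u' ≡ 0` and `u` is constant.
-/

open Set Filter Topology

noncomputable section

/-- Hypothesis (B1) for a single function: continuous, non-decreasing on `[0,∞)`,
positive on `(0,∞)`. -/
def B1cond (f : ℝ → ℝ) : Prop :=
  ContinuousOn f (Set.Ici 0) ∧ MonotoneOn f (Set.Ici 0) ∧ ∀ t : ℝ, 0 < t → 0 < f t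

/-- `w` is not a constant function on `[0,R)`. -/
def NonConstOn (R : EReal) (w : ℝ → ℝ) : Prop :=
  ¬ ∃ c : ℝ, ∀ r : ℝ, 0 ≤ r → (r : EReal) < R → w r = c

/-- A positive radial solution on `B_R` (with `0 < R ≤ ∞`) of the system
`Δ_p u = f₁(|x|)·g₁(v)·|∇u|^α`, `Δ_p v = f₂(|x|)·g₂(v)·g₃(|∇u|)`:
a pair of C¹ functions `u, v : [0,R) → ℝ` (with derivatives `u', v'`) such that
the maps `r ↦ r^{n−1}·u'(r)·|u'(r)|^{p−2}` and `r ↦ r^{n−1}·v'(r)·|v'(r)|^{p−2}`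
are differentiable on `(0,R)` with the prescribed derivatives, `u'(0) = v'(0) = 0`,
and `u, v > 0` on `(0,R)`. -/
structure RadialSol (n : ℕ) (p α : ℝ) (f₁ f₂ g₁ g₂ g₃ : ℝ → ℝ) (R : EReal)
    (u v u' v' : ℝ → ℝ) : Prop where
  hu : ∀ r : ℝ, 0 ≤ r → (r : EReal) < R → HasDerivWithinAt u (u' r) (Set.Ici 0) r
  hv : ∀ r : ℝ, 0 ≤ r → (r : EReal) < R → HasDerivWithinAt v (v' r) (Set.Ici 0) r
  hu'c : ContinuousOn u' {r : ℝ | 0 ≤ r ∧ (r : EReal) < R}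
  hv'c : ContinuousOn v' {r : ℝ | 0 ≤ r ∧ (r : EReal) < R}
  hu'0 : u' 0 = 0
  hv'0 : v' 0 = 0
  hupos : ∀ r : ℝ, 0 < r → (r : EReal) < R → 0 < u r
  hvpos : ∀ r : ℝ, 0 < r → (r : EReal) < R → 0 < v r
  hequ : ∀ r : ℝ, 0 < r → (r : EReal) < R →
    HasDerivAt (fun t : ℝ => t ^ (n - 1) * u' t * |u' t| ^ (p - 2))
      (r ^ (n - 1) * (f₁ r * g₁ (v r) * |u' r| ^ α)) r
  heqv : ∀ r : ℝ, 0 < r → (r : EReal) < R →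
    HasDerivAt (fun t : ℝ => t ^ (n - 1) * v' t * |v' t| ^ (p - 2))
      (r ^ (n - 1) * (f₂ r * g₂ (v r) * g₃ (|u' r|))) r

open intervalIntegral

theorem eqOn_zero_of_le_mul_integral {h : ℝ → ℝ} {a b K : ℝ} (hc : ContinuousOn h (Icc a b))
    (h_nonneg : ∀ x ∈ Icc a b, 0 ≤ h x) (hle : ∀ x ∈ Icc a b, h x ≤ K * ∫ s in a..x, h s) :
    ∀ x ∈ Icc a b, h x = 0 := by
  set H : ℝ → ℝ := fun x => ∫ s in a..x, h s
  have hH_deriv : ∀ x ∈ Icc a b, HasDerivWithinAt H (h x) (Icc a b) x := by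
    intro x hx
    have : Fact (x ∈ Icc a b) := ⟨hx⟩
    exact integral_hasDerivWithinAt_right
      ((hc.mono (Icc_subset_Icc le_rfl hx.2)).intervalIntegrable_of_Icc hx.1)
      (hc.stronglyMeasurableAtFilter_nhdsWithin measurableSet_Icc x) (hc x hx)
  have hH_nonneg : ∀ x ∈ Icc a b, 0 ≤ H x := fun x hx =>
    integral_nonneg hx.1 fun s hs => h_nonneg s ⟨hs.1, hs.2.trans hx.2⟩
  have hH_zero : ∀ x ∈ Icc a b, H x = 0 :=
    eq_zero_of_abs_deriv_le_mul_abs_self_of_eq_zero_right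
      (fun x hx => (hH_deriv x hx).continuousWithinAt)
      (fun x hx => (hH_deriv x (Ico_subset_Icc_self hx)).mono_of_mem_nhdsWithin
        (Icc_mem_nhdsGE_of_mem hx))
      integral_same
      (fun x hx => by
        rw [Real.norm_of_nonneg (h_nonneg x (Ico_subset_Icc_self hx)),
          Real.norm_of_nonneg (hH_nonneg x (Ico_subset_Icc_self hx))]
        exact hle x (Ico_subset_Icc_self hx))
  intro x hx
  have := hle x hx
  rw [show (∫ s in a..x, h s) = 0 from hH_zero x hx, mul_zero] at this
  exact le_antisymm this (h_nonneg x hx)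

theorem mul_rpow_sub_two {y p : ℝ} (hy : 0 ≤ y) (hp : p ≠ 1) : y * y ^ (p - 2) = y ^ (p - 1) := by
  rw [mul_comm, ← Real.rpow_add_one' hy (by contrapose! hp; linarith)]
  ring_nf

theorem abs_mul_abs_rpow_sub_two (x : ℝ) {p : ℝ} (hp : p ≠ 1) :
    |x * |x| ^ (p - 2)| = |x| ^ (p - 1) := by
  rw [abs_mul, abs_of_nonneg (Real.rpow_nonneg (abs_nonneg x) _)]
  exact mul_rpow_sub_two (abs_nonneg x) hp

theorem continuous_mul_abs_rpow_sub_two {p : ℝ} (hp : 1 < p) :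
    Continuous fun x : ℝ => x * |x| ^ (p - 2) := by
  refine continuous_iff_continuousAt.2 fun x => ?_
  rcases eq_or_ne x 0 with rfl | hx
  · have h : Tendsto (fun x : ℝ => |x| ^ (p - 1)) (𝓝 0) (𝓝 0) := by
      simpa [Real.zero_rpow (by linarith : p - 1 ≠ 0)] using
        (continuous_abs.rpow_const fun _ => Or.inr (by linarith : 0 ≤ p - 1)).tendsto 0
    simpa [ContinuousAt] using
      squeeze_zero_norm (fun y => (abs_mul_abs_rpow_sub_two y hp.ne').le) h
  · exact continuousAt_id.mul (continuous_abs.continuousAt.rpow_const (Or.inl (abs_ne_zero.2 hx)))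

theorem rpow_le_rpow_sub_mul_rpow {x W q r : ℝ} (hx : 0 ≤ x) (hxW : x ≤ W) (hq : 0 < q)
    (hqr : q ≤ r) : x ^ r ≤ W ^ (r - q) * x ^ q := by
  calc x ^ r = x ^ (r - q) * x ^ q := by
        rw [← Real.rpow_add' hx (by linarith), sub_add_cancel]
    _ ≤ W ^ (r - q) * x ^ q := by gcongr

section Flux

variable {k : ℕ} {p α b : ℝ} {w F : ℝ → ℝ}

theorem abs_rpow_le_mul_integral_of_flux_eq_integral {M W : ℝ} (hp : 1 < p) (hα : p - 1 ≤ α)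
    (hw : ContinuousOn w (Icc 0 b)) (hw0 : w 0 = 0) (hF : ContinuousOn F (Icc 0 b))
    (hFM : ∀ s ∈ Icc 0 b, |F s| ≤ M) (hwW : ∀ s ∈ Icc 0 b, |w s| ≤ W)
    (hflux : ∀ x ∈ Icc 0 b,
      x ^ k * w x * |w x| ^ (p - 2) = ∫ s in 0..x, s ^ k * (F s * |w s| ^ α)) :
    ∀ x ∈ Icc 0 b, |w x| ^ (p - 1) ≤ M * W ^ (α - (p - 1)) * ∫ s in 0..x, |w s| ^ (p - 1) := by
  intro x hx
  rcases hx.1.eq_or_lt with rfl | hx0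
  · simp [hw0, Real.zero_rpow (by linarith : p - 1 ≠ 0)]
  have hsub : Icc 0 x ⊆ Icc 0 b := Icc_subset_Icc le_rfl hx.2
  have hw_abs_rpow : ∀ q : ℝ, 0 ≤ q → ContinuousOn (fun s => |w s| ^ q) (Icc 0 x) :=
    fun q hq => (hw.mono hsub).abs.rpow_const (p := q) fun _ _ => Or.inr hq
  have hpoint : ∀ s ∈ Icc 0 x, |s ^ k * (F s * |w s| ^ α)|
      ≤ x ^ k * (M * W ^ (α - (p - 1)) * |w s| ^ (p - 1)) := by
    intro s hs
    rw [abs_mul, abs_mul, abs_of_nonneg (pow_nonneg hs.1 k),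
      abs_of_nonneg (Real.rpow_nonneg (abs_nonneg _) _), mul_assoc M]
    have hM : 0 ≤ M := (abs_nonneg _).trans (hFM s (hsub hs))
    gcongr
    · exact hs.1
    · exact hs.2
    · exact hFM s (hsub hs)
    · exact rpow_le_rpow_sub_mul_rpow (abs_nonneg _) (hwW s (hsub hs)) (by linarith) hα
  have hx_pow : 0 < x ^ k := pow_pos hx0 k
  refine le_of_mul_le_mul_left ?_ hx_pow
  calc x ^ k * |w x| ^ (p - 1) = |x ^ k * w x * |w x| ^ (p - 2)| := by
        rw [mul_assoc, abs_mul, abs_mul_abs_rpow_sub_two _ hp.ne', abs_of_pos hx_pow]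
    _ = |∫ s in 0..x, s ^ k * (F s * |w s| ^ α)| := by rw [hflux x hx]
    _ ≤ ∫ s in 0..x, |s ^ k * (F s * |w s| ^ α)| := abs_integral_le_integral_abs hx.1
    _ ≤ ∫ s in 0..x, x ^ k * (M * W ^ (α - (p - 1)) * |w s| ^ (p - 1)) :=
        integral_mono_on hx.1
          ((((continuous_pow k).continuousOn.mul ((hF.mono hsub).mul
            (hw_abs_rpow α (by linarith)))).intervalIntegrable_of_Icc hx.1).abs)
          ((continuousOn_const.mul (continuousOn_const.mul
            (hw_abs_rpow (p - 1) (by linarith)))).intervalIntegrable_of_Icc hx.1)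
          hpoint
    _ = x ^ k * (M * W ^ (α - (p - 1)) * ∫ s in 0..x, |w s| ^ (p - 1)) := by
        rw [integral_const_mul, integral_const_mul]

theorem eqOn_zero_of_flux_eq_integral (hp : 1 < p) (hα : p - 1 ≤ α)
    (hw : ContinuousOn w (Icc 0 b)) (hw0 : w 0 = 0) (hF : ContinuousOn F (Icc 0 b))
    (hflux : ∀ x ∈ Icc 0 b,
      x ^ k * w x * |w x| ^ (p - 2) = ∫ s in 0..x, s ^ k * (F s * |w s| ^ α)) :
    ∀ x ∈ Icc 0 b, w x = 0 := by
  obtain ⟨M, hM⟩ := isCompact_Icc.exists_bound_of_continuousOn hF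
  obtain ⟨W, hW⟩ := isCompact_Icc.exists_bound_of_continuousOn hw
  have hzero := eqOn_zero_of_le_mul_integral
    (hw.abs.rpow_const fun _ _ => Or.inr (by linarith : 0 ≤ p - 1))
    (fun s _ => Real.rpow_nonneg (abs_nonneg _) _)
    (abs_rpow_le_mul_integral_of_flux_eq_integral hp hα hw hw0 hF hM hW hflux)
  intro x hx
  simpa [Real.rpow_eq_zero (abs_nonneg _) (by linarith : p - 1 ≠ 0)] using hzero x hx

end Flux

theorem Icc_subset_setOf_coe_lt {R : EReal} {b : ℝ} (hbR : (b : EReal) < R) :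
    Icc 0 b ⊆ {r : ℝ | 0 ≤ r ∧ (r : EReal) < R} :=
  fun _ hs => ⟨hs.1, (EReal.coe_le_coe_iff.2 hs.2).trans_lt hbR⟩

namespace RadialSol

variable {n : ℕ} {p α : ℝ} {f₁ f₂ g₁ g₂ g₃ : ℝ → ℝ} {R : EReal} {u v u' v' : ℝ → ℝ}
  (sol : RadialSol n p α f₁ f₂ g₁ g₂ g₃ R u v u' v')
include sol

theorem continuousOn_Icc_v {b : ℝ} (hbR : (b : EReal) < R) : ContinuousOn v (Icc 0 b) :=
  fun s hs => ((sol.hv s hs.1 ((Icc_subset_setOf_coe_lt hbR hs).2)).continuousWithinAt).mono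
    fun _ ht => ht.1

theorem v_nonneg {r : ℝ} (hr : 0 ≤ r) (hrR : (r : EReal) < R) : 0 ≤ v r := by
  rcases hr.eq_or_lt with rfl | hr0
  · have hlt : ∀ᶠ s : ℝ in 𝓝[>] 0, (s : EReal) < R :=
      nhdsWithin_le_nhds ((isOpen_lt continuous_coe_real_ereal continuous_const).mem_nhds hrR)
    refine ge_of_tendsto ((sol.hv 0 le_rfl hrR).continuousWithinAt.tendsto.mono_left
      (nhdsWithin_mono _ Ioi_subset_Ici_self)) ?_
    filter_upwards [hlt, self_mem_nhdsWithin] with s hsR hs0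
    exact (sol.hvpos s hs0 hsR).le
  · exact (sol.hvpos r hr0 hrR).le

theorem continuousOn_Icc_coeff (hf₁ : ContinuousOn f₁ (Ici 0)) (hg₁ : ContinuousOn g₁ (Ici 0))
    {b : ℝ} (hbR : (b : EReal) < R) : ContinuousOn (fun s => f₁ s * g₁ (v s)) (Icc 0 b) :=
  (hf₁.mono fun _ hs => hs.1).mul (hg₁.comp (sol.continuousOn_Icc_v hbR)
    fun _ hs => sol.v_nonneg hs.1 (Icc_subset_setOf_coe_lt hbR hs).2)

theorem flux_eq_integral (hp : 1 < p) (hα : 0 ≤ α) (hf₁ : ContinuousOn f₁ (Ici 0))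
    (hg₁ : ContinuousOn g₁ (Ici 0)) {b : ℝ} (hb : 0 ≤ b) (hbR : (b : EReal) < R) :
    b ^ (n - 1) * u' b * |u' b| ^ (p - 2)
      = ∫ s in 0..b, s ^ (n - 1) * (f₁ s * g₁ (v s) * |u' s| ^ α) := by
  have hsub := Icc_subset_setOf_coe_lt hbR
  have hu' : ContinuousOn u' (Icc 0 b) := sol.hu'c.mono hsub
  have hψ : ContinuousOn (fun t => u' t * |u' t| ^ (p - 2)) (Icc 0 b) :=
    (continuous_mul_abs_rpow_sub_two hp).comp_continuousOn hu'
  have hflux : ContinuousOn (fun t : ℝ => t ^ (n - 1) * u' t * |u' t| ^ (p - 2)) (Icc 0 b) := by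
    simp only [mul_assoc]
    exact (continuous_pow (n - 1)).continuousOn.mul hψ
  have hrhs : ContinuousOn (fun s : ℝ => s ^ (n - 1) * (f₁ s * g₁ (v s) * |u' s| ^ α))
      (Icc 0 b) :=
    (continuous_pow (n - 1)).continuousOn.mul
      ((sol.continuousOn_Icc_coeff hf₁ hg₁ hbR).mul (hu'.abs.rpow_const fun _ _ => Or.inr hα))
  rw [integral_eq_sub_of_hasDerivAt_of_le hb hflux
    (fun s hs => sol.hequ s hs.1 (hsub (Ioo_subset_Icc_self hs)).2)
    (hrhs.intervalIntegrable_of_Icc hb)]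
  simp [sol.hu'0]

theorem u'_eq_zero (hp : 1 < p) (hα : p - 1 ≤ α) (hf₁ : ContinuousOn f₁ (Ici 0))
    (hg₁ : ContinuousOn g₁ (Ici 0)) {r : ℝ} (hr : 0 ≤ r) (hrR : (r : EReal) < R) :
    u' r = 0 :=
  eqOn_zero_of_flux_eq_integral (F := fun s => f₁ s * g₁ (v s)) hp hα
    (sol.hu'c.mono (Icc_subset_setOf_coe_lt hrR)) sol.hu'0
    (sol.continuousOn_Icc_coeff hf₁ hg₁ hrR)
    (fun x hx => sol.flux_eq_integral hp (by linarith) hf₁ hg₁ hx.1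
      (Icc_subset_setOf_coe_lt hrR hx).2)
    r ⟨hr, le_rfl⟩

theorem u_eq_u_zero (hp : 1 < p) (hα : p - 1 ≤ α) (hf₁ : ContinuousOn f₁ (Ici 0))
    (hg₁ : ContinuousOn g₁ (Ici 0)) {r : ℝ} (hr : 0 ≤ r) (hrR : (r : EReal) < R) :
    u r = u 0 := by
  have hsub := Icc_subset_setOf_coe_lt hrR
  refine constant_of_has_deriv_right_zero
    (fun s hs => ((sol.hu s hs.1 (hsub hs).2).continuousWithinAt).mono fun _ ht => ht.1)
    (fun s hs => ?_) r ⟨hr, le_rfl⟩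
  have hs' := hsub (Ico_subset_Icc_self hs)
  rw [← sol.u'_eq_zero hp hα hf₁ hg₁ hs'.1 hs'.2]
  exact (sol.hu s hs'.1 hs'.2).mono (Ici_subset_Ici.2 hs'.1)

end RadialSol

theorem nonexistence_of_solutions_general
    (n : ℕ) (p α : ℝ) (hp : 1 < p) (hα : p - 1 ≤ α)
    (f₁ f₂ g₁ g₂ g₃ : ℝ → ℝ)
    (hf₁ : B1cond f₁) (hg₁ : B1cond g₁)
    (R : ℝ) :
    ¬ ∃ u v u' v' : ℝ → ℝ,
        RadialSol n p α f₁ f₂ g₁ g₂ g₃ (R : EReal) u v u' v' ∧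
        NonConstOn (R : EReal) u ∧ NonConstOn (R : EReal) v := by
  rintro ⟨u, v, u', v', sol, hu_nonconst, -⟩
  exact hu_nonconst ⟨u 0, fun r hr hrR => sol.u_eq_u_zero hp hα hf₁.1 hg₁.1 hr hrR⟩

/-- Lemma 2.2 (Nonexistence): under (B1) and α ≥ p−1, there is no non-constant positive
radial solution on any ball B_R with R > 0. -/
theorem nonexistence_of_solutions
    (n : ℕ) (hn : 2 ≤ n) (p α : ℝ) (hp : 1 < p) (hα0 : 0 ≤ α) (hα : p - 1 ≤ α)
    (f₁ f₂ g₁ g₂ g₃ : ℝ → ℝ)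
    (hf₁ : B1cond f₁) (hf₂ : B1cond f₂) (hg₁ : B1cond g₁) (hg₂ : B1cond g₂) (hg₃ : B1cond g₃)
    (R : ℝ) (hR : 0 < R) :
    ¬ ∃ u v u' v' : ℝ → ℝ,
        RadialSol n p α f₁ f₂ g₁ g₂ g₃ (R : EReal) u v u' v' ∧
        NonConstOn (R : EReal) u ∧ NonConstOn (R : EReal) v :=
  nonexistence_of_solutions_general n p α hp hα f₁ f₂ g₁ g₂ g₃ hf₁ hg₁ R
end
end

section
/- Assume hypothesis (B1) and 0 ≤ α < p − 1, and let (u,v) be a non-constant positive radial solution on B_R of the system Δ_p u = f₁(|x|)·g₁(v)·|∇u|^α, Δ_p v = f₂(|x|)·g₂(v)·g₃(|∇u|). Then u and v are convex on (0,R); equivalently, u' and v' are non-decreasing on (0,R). -/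
/-!
With `m = n - 1` and `W = r^m φₚ(u')`, the equation for `u` says `W' ≥ 0`; as `W(0) = 0` this gives
`u' ≥ 0`, and likewise `v' ≥ 0`, so `v` and hence the coefficient `c = f₁ g₁(v)` are non-decreasing.
Writing `z = φₚ(u') = u'^(p-1)` and `β = α/(p-1) < 1`, the equation becomes `(r^m z)' = r^m c z^β`,
i.e. `z' = c z^β - m z / r`. Past the last zero `ρ` of `W` one has
`(W^(1-β))' = (1-β) c(t) t^(m(1-β)) ≤ (1-β) c(r) t^(m(1-β))`, and integrating over `[ρ, r]` gives
`m z(r)^(1-β) ≤ r c(r)`, which is exactly `z'(r) ≥ 0`. The same argument with `β = 0` and the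
non-decreasing coefficient `f₂ g₂(v) g₃(u')` handles `v'`, and monotone derivatives give convexity.
-/

open Set Filter Topology

noncomputable section

/-- The `p`-Laplacian nonlinearity `φₚ(x) = x |x|^(p-2)`, so that `Δₚ` of a radial function `w` is
`r^(1-n) (r^(n-1) φₚ(w'))'`. -/
def phiP (p x : ℝ) : ℝ := x * |x| ^ (p - 2)

@[simp]
lemma phiP_zero (p : ℝ) : phiP p 0 = 0 := by simp [phiP]

lemma phiP_of_pos (p : ℝ) {x : ℝ} (hx : 0 < x) : phiP p x = x ^ (p - 1) := by
  rw [phiP, abs_of_pos hx, show p - 1 = 1 + (p - 2) by ring, Real.rpow_add hx, Real.rpow_one]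

lemma phiP_of_nonneg {p : ℝ} (hp : p ≠ 1) {x : ℝ} (hx : 0 ≤ x) : phiP p x = x ^ (p - 1) := by
  rcases hx.eq_or_lt with rfl | hx
  · rw [phiP_zero, Real.zero_rpow (sub_ne_zero.2 hp)]
  · exact phiP_of_pos p hx

lemma phiP_nonneg_iff (p : ℝ) {x : ℝ} : 0 ≤ phiP p x ↔ 0 ≤ x := by
  rcases lt_trichotomy x 0 with hx | rfl | hx
  · simp only [phiP, hx.not_ge, iff_false, not_le]
    exact mul_neg_of_neg_of_pos hx (Real.rpow_pos_of_pos (abs_pos.2 hx.ne) _)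
  · simp
  · simp only [hx.le, iff_true]
    exact (phiP_of_pos p hx).symm ▸ Real.rpow_nonneg hx.le _

lemma continuous_phiP {p : ℝ} (hp : 1 < p) : Continuous (phiP p) := by
  have hsplit : phiP p = fun x => max x 0 ^ (p - 1) - max (-x) 0 ^ (p - 1) := by
    funext x
    have h0 : (0 : ℝ) ^ (p - 1) = 0 := Real.zero_rpow (by linarith)
    rcases le_total 0 x with hx | hx
    · rw [phiP_of_nonneg hp.ne' hx, max_eq_left hx, max_eq_right (neg_nonpos.2 hx), h0, sub_zero]
    · have hneg : phiP p x = -phiP p (-x) := by simp only [phiP, abs_neg]; ring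
      rw [hneg, phiP_of_nonneg hp.ne' (neg_nonneg.2 hx), max_eq_right hx,
        max_eq_left (neg_nonneg.2 hx), h0, zero_sub]
  rw [hsplit]
  exact ((continuous_id.max continuous_const).rpow_const fun _ => Or.inr (by linarith)).sub
    ((continuous_neg.max continuous_const).rpow_const fun _ => Or.inr (by linarith))

lemma strictMonoOn_phiP {p : ℝ} (hp : 1 < p) : StrictMonoOn (phiP p) (Ici 0) := by
  refine (Real.strictMonoOn_rpow_Ici_of_exponent_pos (sub_pos.2 hp)).congr fun x hx => ?_
  exact (phiP_of_nonneg hp.ne' hx).symm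

lemma abs_rpow_eq_phiP_rpow {p : ℝ} (hp : 1 < p) (α : ℝ) {x : ℝ} (hx : 0 ≤ x) :
    |x| ^ α = phiP p x ^ (α / (p - 1)) := by
  rw [phiP_of_nonneg hp.ne' hx, ← Real.rpow_mul hx, abs_of_nonneg hx,
    mul_div_cancel₀ _ (sub_pos.2 hp).ne']

lemma monotoneOn_Icc_of_hasDerivAt_nonneg {f f' : ℝ → ℝ} {a b : ℝ}
    (hf : ContinuousOn f (Icc a b)) (hf' : ∀ x ∈ Ioo a b, HasDerivAt f (f' x) x)
    (hf'₀ : ∀ x ∈ Ioo a b, 0 ≤ f' x) : MonotoneOn f (Icc a b) :=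
  monotoneOn_of_hasDerivWithinAt_nonneg (convex_Icc a b) hf
    (by simpa only [interior_Icc] using fun x hx => (hf' x hx).hasDerivWithinAt)
    (by simpa only [interior_Icc] using hf'₀)

lemma ContinuousOn.exists_last_zero {f : ℝ → ℝ} {a b : ℝ} (hab : a ≤ b)
    (hf : ContinuousOn f (Icc a b)) (ha : f a = 0) (hb : f b ≠ 0) :
    ∃ c ∈ Ico a b, f c = 0 ∧ ∀ t ∈ Ioc c b, f t ≠ 0 := by
  have hK : IsCompact (Icc a b ∩ f ⁻¹' {0}) :=
    isCompact_Icc.of_isClosed_subset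
      (hf.preimage_isClosed_of_isClosed isClosed_Icc isClosed_singleton) inter_subset_left
  obtain ⟨c, ⟨hc, hfc⟩, hmax⟩ := hK.exists_isGreatest ⟨a, ⟨left_mem_Icc.2 hab, ha⟩⟩
  refine ⟨c, ⟨hc.1, hc.2.lt_of_ne ?_⟩, hfc, fun t ht hft => ?_⟩
  · rintro rfl; exact hb hfc
  · exact (hmax ⟨⟨hc.1.trans ht.1.le, ht.2⟩, hft⟩).not_gt ht.1

lemma hasDerivAt_of_hasDerivAt_pow_mul {z : ℝ → ℝ} {m : ℕ} {w t : ℝ} (ht : t ≠ 0)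
    (h : HasDerivAt (fun s => s ^ m * z s) (t ^ m * w) t) :
    HasDerivAt z (w - m * z t / t) t := by
  have hquot := h.div (hasDerivAt_pow m t) (pow_ne_zero m ht)
  have heq : (fun s => s ^ m * z s / s ^ m) =ᶠ[𝓝 t] z := by
    filter_upwards [isOpen_ne.mem_nhds ht] with s hs
    field_simp [pow_ne_zero m hs]
  refine (hquot.congr_of_eventuallyEq heq.symm).congr_deriv ?_
  rcases m with _ | m
  · simp
  · simp only [Nat.add_sub_cancel, pow_succ]
    field_simp

lemma hasDerivAt_rpow_of_hasDerivAt_pow_mul {z : ℝ → ℝ} {m : ℕ} {β c t : ℝ} (ht : 0 < t)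
    (hz : 0 < z t) (h : HasDerivAt (fun s => s ^ m * z s) (t ^ m * (c * z t ^ β)) t) :
    HasDerivAt (fun s => (s ^ m * z s) ^ (1 - β)) ((1 - β) * c * t ^ (m * (1 - β))) t := by
  convert h.rpow_const (p := 1 - β) (Or.inl (by positivity)) using 1
  have hW : (t ^ m * z t) ^ (1 - β - 1) = t ^ (-(m * β)) * z t ^ (-β) := by
    rw [show 1 - β - 1 = -β by ring, Real.mul_rpow (by positivity) hz.le, ← Real.rpow_natCast,
      ← Real.rpow_mul ht.le, mul_neg]
  have hz1 : z t ^ β * z t ^ (-β) = 1 := by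
    rw [← Real.rpow_add hz, add_neg_cancel, Real.rpow_zero]
  have ht1 : t ^ m * t ^ (-(m * β)) = t ^ (m * (1 - β)) := by
    rw [← Real.rpow_natCast, ← Real.rpow_add ht]
    ring_nf
  rw [hW]
  linear_combination (-(1 - β) * c * (t ^ m * t ^ (-(m * β)))) * hz1 - (1 - β) * c * ht1

lemma sub_le_of_hasDerivAt_le_mul_rpow {G c : ℝ → ℝ} {a b K M : ℝ} (ha : 0 ≤ a) (hab : a ≤ b)
    (hM : 0 < M + 1) (hG : ContinuousOn G (Icc a b))
    (hG' : ∀ t ∈ Ioo a b, HasDerivAt G (c t * t ^ M) t) (hc : ∀ t ∈ Ioo a b, c t ≤ K) :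
    G b - G a ≤ K * (b ^ (M + 1) - a ^ (M + 1)) / (M + 1) := by
  set H : ℝ → ℝ := fun t => K * t ^ (M + 1) / (M + 1)
  have hH' : ∀ t ∈ Ioo a b, HasDerivAt H (K * t ^ M) t := fun t ht => by
    have h := ((Real.hasDerivAt_rpow_const (p := M + 1) (Or.inl (ha.trans_lt ht.1).ne')).const_mul
      K).div_const (M + 1)
    rw [add_sub_cancel_right, mul_left_comm, mul_div_cancel_left₀ _ hM.ne'] at h
    exact h
  have hmono : MonotoneOn (H - G) (Icc a b) := by
    refine monotoneOn_Icc_of_hasDerivAt_nonneg (f' := fun t => K * t ^ M - c t * t ^ M) ?_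
      (fun t ht => (hH' t ht).sub (hG' t ht)) fun t ht => ?_
    · exact ((continuousOn_const.mul (continuousOn_id.rpow_const fun _ _ => Or.inr hM.le)).div_const
        _).sub hG
    · simp only [← sub_mul]
      exact mul_nonneg (sub_nonneg.2 (hc t ht)) (Real.rpow_nonneg (ha.trans ht.1.le) M)
  have h := hmono (left_mem_Icc.2 hab) (right_mem_Icc.2 hab) hab
  simp only [Pi.sub_apply, H] at h
  rw [mul_sub, sub_div]
  linarith

section PowMul

variable {z c : ℝ → ℝ} {m : ℕ} {β : ℝ}

lemma mul_le_of_hasDerivAt_pow_mul {r : ℝ} (hβ : β < 1) (hr : 0 < r) (hz0 : z 0 = 0)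
    (hWc : ContinuousOn (fun t => t ^ m * z t) (Icc 0 r))
    (hW' : ∀ t ∈ Ioo 0 r, HasDerivAt (fun t => t ^ m * z t) (t ^ m * (c t * z t ^ β)) t)
    (hz : ∀ t ∈ Ioc 0 r, 0 ≤ z t) (hc : ∀ t ∈ Ioo 0 r, c t ≤ c r) (hcr : 0 ≤ c r)
    (hzr : 0 < z r) : m * z r ≤ c r * z r ^ β * r := by
  set γ := 1 - β
  set M := (m : ℝ) * γ
  have hγ : 0 < γ := sub_pos.2 hβ
  have hM : 0 ≤ M := by positivity
  obtain ⟨ρ, ⟨hρ0, hρr⟩, hWρ, hWne⟩ := hWc.exists_last_zero hr.le (by simp [hz0])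
    (by positivity)
  have hzpos : ∀ t ∈ Ioo ρ r, 0 < z t := fun t ht => by
    have ht0 : 0 < t := hρ0.trans_lt ht.1
    have hWt := hWne t ⟨ht.1, ht.2.le⟩
    exact (hz t ⟨ht0, ht.2.le⟩).lt_of_ne fun h => hWt (by rw [← h, mul_zero])
  have hcomp := sub_le_of_hasDerivAt_le_mul_rpow (c := fun t => γ * c t) (K := γ * c r) hρ0
    hρr.le (by linarith) ((hWc.mono (Icc_subset_Icc_left hρ0)).rpow_const fun _ _ => Or.inr hγ.le)
    (fun t ht => hasDerivAt_rpow_of_hasDerivAt_pow_mul (hρ0.trans_lt ht.1) (hzpos t ht)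
      (hW' t ⟨hρ0.trans_lt ht.1, ht.2⟩))
    (fun t ht => mul_le_mul_of_nonneg_left (hc t ⟨hρ0.trans_lt ht.1, ht.2⟩) hγ.le)
  have hWr : (r ^ m * z r) ^ γ = r ^ M * z r ^ γ := by
    rw [Real.mul_rpow (by positivity) hzr.le, ← Real.rpow_natCast, ← Real.rpow_mul hr.le]
  have hbound : z r ^ γ * (M + 1) ≤ γ * c r * r := by
    have hρM : 0 ≤ ρ ^ (M + 1) := Real.rpow_nonneg hρ0 _
    rw [hWρ, Real.zero_rpow hγ.ne', sub_zero, hWr, le_div_iff₀ (by linarith),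
      Real.rpow_add_one hr.ne'] at hcomp
    have hrM : 0 < r ^ M := by positivity
    nlinarith [mul_nonneg (mul_nonneg hγ.le hcr) hρM]
  have hsplit : z r = z r ^ β * z r ^ γ := by
    rw [← Real.rpow_add hzr, add_sub_cancel, Real.rpow_one]
  calc (m : ℝ) * z r = z r ^ β * (m * z r ^ γ) := by rw [mul_left_comm, ← hsplit]
    _ ≤ z r ^ β * (c r * r) := by
        refine mul_le_mul_of_nonneg_left ?_ (by positivity)
        nlinarith [mul_nonneg hcr hr.le, Real.rpow_nonneg hzr.le γ]
    _ = c r * z r ^ β * r := by ring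

theorem monotoneOn_of_hasDerivAt_pow_mul {b : ℝ} (hβ : β < 1) (hz0 : z 0 = 0)
    (hWc : ContinuousOn (fun t => t ^ m * z t) (Icc 0 b))
    (hW' : ∀ t ∈ Ioo 0 b, HasDerivAt (fun t => t ^ m * z t) (t ^ m * (c t * z t ^ β)) t)
    (hz : ∀ t ∈ Ioc 0 b, 0 ≤ z t) (hc : MonotoneOn c (Ioc 0 b))
    (hc0 : ∀ t ∈ Ioc 0 b, 0 ≤ c t) : MonotoneOn z (Ioc 0 b) := by
  intro x hx y hy hxy
  rcases (hz x hx).eq_or_lt with hzx | hzx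
  · exact hzx ▸ hz y hy
  have hWmono : MonotoneOn (fun t => t ^ m * z t) (Icc 0 b) :=
    monotoneOn_Icc_of_hasDerivAt_nonneg hWc hW' fun t ht =>
      have ht' : t ∈ Ioc 0 b := Ioo_subset_Ioc_self ht
      mul_nonneg (pow_nonneg ht.1.le m)
        (mul_nonneg (hc0 t ht') (Real.rpow_nonneg (hz t ht') β))
  have hsub : Icc x y ⊆ Ioc 0 b := fun t ht => ⟨hx.1.trans_le ht.1, ht.2.trans hy.2⟩
  have hzpos : ∀ t ∈ Icc x y, 0 < z t := fun t ht =>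
    have hWt := (mul_pos (pow_pos hx.1 m) hzx).trans_le
      (hWmono (Ioc_subset_Icc_self hx) (Ioc_subset_Icc_self (hsub ht)) ht.1)
    pos_of_mul_pos_right hWt (pow_nonneg (hsub ht).1.le m)
  refine monotoneOn_Icc_of_hasDerivAt_nonneg (f' := fun t => c t * z t ^ β - m * z t / t) ?_
    (fun t ht => ?_) (fun t ht => ?_) (left_mem_Icc.2 hxy) (right_mem_Icc.2 hxy) hxy
  · refine (((hWc.mono (hsub.trans Ioc_subset_Icc_self)).div (continuousOn_pow m)
      fun t ht => (pow_pos (hsub ht).1 m).ne').congr fun t ht => ?_)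
    simp only [Pi.div_apply]
    field_simp [(pow_pos (hsub ht).1 m).ne']
  · exact hasDerivAt_of_hasDerivAt_pow_mul (hsub (Ioo_subset_Icc_self ht)).1.ne'
      (hW' t ⟨(hsub (Ioo_subset_Icc_self ht)).1, ht.2.trans_le hy.2⟩)
  · have ht' := hsub (Ioo_subset_Icc_self ht)
    have hle := mul_le_of_hasDerivAt_pow_mul hβ ht'.1 hz0 (hWc.mono (Icc_subset_Icc_right ht'.2))
      (fun s hs => hW' s ⟨hs.1, hs.2.trans_le ht'.2⟩)
      (fun s hs => hz s ⟨hs.1, hs.2.trans ht'.2⟩)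
      (fun s hs => hc ⟨hs.1, hs.2.le.trans ht'.2⟩ ht' hs.2.le) (hc0 t ht')
      (hzpos t (Ioo_subset_Icc_self ht))
    exact sub_nonneg.2 ((div_le_iff₀ ht'.1).2 hle)

end PowMul

lemma B1cond.nonneg {f : ℝ → ℝ} (hf : B1cond f) {t : ℝ} (ht : 0 ≤ t) : 0 ≤ f t := by
  rcases ht.eq_or_lt with rfl | ht
  · exact ContinuousWithinAt.closure_le (s := Ioi 0) (by simp [closure_Ioi])
      continuousWithinAt_const ((hf.1 0 self_mem_Ici).mono Ioi_subset_Ici_self)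
      fun t ht => (hf.2.2 t ht).le
  · exact (hf.2.2 t ht).le

lemma B1cond.monotoneOn_comp {f w : ℝ → ℝ} {s : Set ℝ} (hf : B1cond f) (hw : MonotoneOn w s)
    (hw0 : ∀ x ∈ s, 0 ≤ w x) : MonotoneOn (fun x => f (w x)) s :=
  hf.2.1.comp hw hw0

lemma B1cond.monotoneOn_mul_comp {f g w : ℝ → ℝ} {s : Set ℝ} (hf : B1cond f) (hg : B1cond g)
    (hs : s ⊆ Ici 0) (hw : MonotoneOn w s) (hw0 : ∀ x ∈ s, 0 ≤ w x) :
    MonotoneOn (fun x => f x * g (w x)) s :=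
  (hf.2.1.mono hs).mul (hg.monotoneOn_comp hw hw0) (fun _ hx => hf.nonneg (hs hx))
    fun x hx => hg.nonneg (hw0 x hx)

lemma B1cond.mul_comp_nonneg {f g : ℝ → ℝ} (hf : B1cond f) (hg : B1cond g) {x y : ℝ} (hx : 0 ≤ x)
    (hy : 0 ≤ y) : 0 ≤ f x * g y :=
  mul_nonneg (hf.nonneg hx) (hg.nonneg hy)

section Radial

variable {R : EReal}

lemma isOpen_radial : IsOpen {r : ℝ | 0 < r ∧ (r : EReal) < R} :=
  isOpen_Ioi.inter (isOpen_Iio.preimage continuous_coe_real_ereal)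

lemma convex_radial : Convex ℝ {r : ℝ | 0 < r ∧ (r : EReal) < R} :=
  OrdConnected.convex ⟨fun _ hx _ hy _ hz =>
    ⟨hx.1.trans_le hz.1, (EReal.coe_le_coe_iff.2 hz.2).trans_lt hy.2⟩⟩

lemma Icc_zero_subset_radial {r : ℝ} (hr : (r : EReal) < R) :
    Icc 0 r ⊆ {s : ℝ | 0 ≤ s ∧ (s : EReal) < R} :=
  fun _ hs => ⟨hs.1, (EReal.coe_le_coe_iff.2 hs.2).trans_lt hr⟩

lemma Ioc_zero_subset_radial {r : ℝ} (hr : (r : EReal) < R) :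
    Ioc 0 r ⊆ {s : ℝ | 0 < s ∧ (s : EReal) < R} :=
  fun _ hs => ⟨hs.1, (EReal.coe_le_coe_iff.2 hs.2).trans_lt hr⟩

lemma hasDerivAt_radial {u u' : ℝ → ℝ}
    (hu : ∀ r : ℝ, 0 ≤ r → (r : EReal) < R → HasDerivWithinAt u (u' r) (Ici 0) r)
    {r : ℝ} (hr : r ∈ {s : ℝ | 0 < s ∧ (s : EReal) < R}) : HasDerivAt u (u' r) r :=
  (hu r hr.1.le hr.2).hasDerivAt (Ici_mem_nhds hr.1)

lemma monotoneOn_radial_of_deriv_nonneg {u u' : ℝ → ℝ}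
    (hu : ∀ r : ℝ, 0 ≤ r → (r : EReal) < R → HasDerivWithinAt u (u' r) (Ici 0) r)
    (hu' : ∀ r ∈ {s : ℝ | 0 < s ∧ (s : EReal) < R}, 0 ≤ u' r) :
    MonotoneOn u {r : ℝ | 0 < r ∧ (r : EReal) < R} :=
  monotoneOn_of_hasDerivWithinAt_nonneg convex_radial
    (fun _ hr => (hasDerivAt_radial hu hr).continuousAt.continuousWithinAt)
    (by simpa only [isOpen_radial.interior_eq] using
      fun r hr => (hasDerivAt_radial hu hr).hasDerivWithinAt)
    (by simpa only [isOpen_radial.interior_eq] using hu')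

lemma convexOn_radial_of_monotoneOn_deriv {u u' : ℝ → ℝ}
    (hu : ∀ r : ℝ, 0 ≤ r → (r : EReal) < R → HasDerivWithinAt u (u' r) (Ici 0) r)
    (hu' : MonotoneOn u' {r : ℝ | 0 < r ∧ (r : EReal) < R}) :
    ConvexOn ℝ {r : ℝ | 0 < r ∧ (r : EReal) < R} u := by
  refine MonotoneOn.convexOn_of_deriv convex_radial
    (fun _ hr => (hasDerivAt_radial hu hr).continuousAt.continuousWithinAt) ?_ ?_
  all_goals rw [isOpen_radial.interior_eq]
  · exact fun _ hr => (hasDerivAt_radial hu hr).differentiableAt.differentiableWithinAt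
  · exact hu'.congr fun _ hr => (hasDerivAt_radial hu hr).deriv.symm

variable {p : ℝ} {m : ℕ} {w : ℝ → ℝ}

lemma pow_mul_mul_abs_rpow_eq_pow_mul_phiP :
    (fun t : ℝ => t ^ m * w t * |w t| ^ (p - 2)) = fun t => t ^ m * phiP p (w t) := by
  funext t
  rw [phiP, mul_assoc]

lemma nonneg_of_radial_flux (hp : 1 < p) {F : ℝ → ℝ}
    (hwc : ContinuousOn w {r : ℝ | 0 ≤ r ∧ (r : EReal) < R}) (hw0 : w 0 = 0)
    (hd : ∀ r : ℝ, 0 < r → (r : EReal) < R →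
      HasDerivAt (fun t : ℝ => t ^ m * w t * |w t| ^ (p - 2)) (r ^ m * F r) r)
    (hF : ∀ r ∈ {s : ℝ | 0 < s ∧ (s : EReal) < R}, 0 ≤ F r) :
    ∀ r ∈ {s : ℝ | 0 < s ∧ (s : EReal) < R}, 0 ≤ w r := by
  rintro r ⟨hr, hrR⟩
  rw [pow_mul_mul_abs_rpow_eq_pow_mul_phiP] at hd
  have hmono : MonotoneOn (fun t => t ^ m * phiP p (w t)) (Icc 0 r) :=
    monotoneOn_Icc_of_hasDerivAt_nonneg
      ((continuousOn_pow m).mul ((continuous_phiP hp).comp_continuousOn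
        (hwc.mono (Icc_zero_subset_radial hrR))))
      (fun t ht => hd t ht.1 ((Ioc_zero_subset_radial hrR (Ioo_subset_Ioc_self ht)).2))
      fun t ht => mul_nonneg (pow_nonneg ht.1.le m)
        (hF t (Ioc_zero_subset_radial hrR (Ioo_subset_Ioc_self ht)))
  have h := hmono (left_mem_Icc.2 hr.le) (right_mem_Icc.2 hr.le) hr.le
  simp only [hw0, phiP_zero, mul_zero] at h
  exact (phiP_nonneg_iff p).1 (nonneg_of_mul_nonneg_right h (pow_pos hr m))

lemma monotoneOn_of_radial_flux (hp : 1 < p) {α : ℝ} (hα : α < p - 1) {c : ℝ → ℝ}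
    (hwc : ContinuousOn w {r : ℝ | 0 ≤ r ∧ (r : EReal) < R}) (hw0 : w 0 = 0)
    (hd : ∀ r : ℝ, 0 < r → (r : EReal) < R →
      HasDerivAt (fun t : ℝ => t ^ m * w t * |w t| ^ (p - 2)) (r ^ m * (c r * |w r| ^ α)) r)
    (hc : MonotoneOn c {r : ℝ | 0 < r ∧ (r : EReal) < R})
    (hc0 : ∀ r ∈ {s : ℝ | 0 < s ∧ (s : EReal) < R}, 0 ≤ c r) :
    MonotoneOn w {r : ℝ | 0 < r ∧ (r : EReal) < R} := by
  have hw := nonneg_of_radial_flux hp hwc hw0 hd fun r hr => mul_nonneg (hc0 r hr) (by positivity)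
  rw [pow_mul_mul_abs_rpow_eq_pow_mul_phiP] at hd
  intro x hx y hy hxy
  have hsub := Ioc_zero_subset_radial hy.2
  have hphi := monotoneOn_of_hasDerivAt_pow_mul (z := fun t => phiP p (w t)) (c := c)
    (b := y) ((div_lt_one (by linarith)).2 hα) (by simp [hw0])
    ((continuousOn_pow m).mul ((continuous_phiP hp).comp_continuousOn
      (hwc.mono (Icc_zero_subset_radial hy.2))))
    (fun t ht => by
      rw [← abs_rpow_eq_phiP_rpow hp α (hw t (hsub (Ioo_subset_Ioc_self ht)))]
      exact hd t ht.1 (hsub (Ioo_subset_Ioc_self ht)).2)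
    (fun t ht => (phiP_nonneg_iff p).2 (hw t (hsub ht))) (hc.mono hsub)
    (fun t ht => hc0 t (hsub ht)) ⟨hx.1, hxy⟩ ⟨hy.1, le_rfl⟩ hxy
  exact ((strictMonoOn_phiP hp).le_iff_le (hw x hx) (hw y hy)).1 hphi

end Radial

theorem convexity_of_solutions_general
    (n : ℕ) (p α : ℝ) (hp : 1 < p) (hα : α < p - 1)
    (f₁ f₂ g₁ g₂ g₃ : ℝ → ℝ)
    (hf₁ : B1cond f₁) (hf₂ : B1cond f₂) (hg₁ : B1cond g₁) (hg₂ : B1cond g₂) (hg₃ : B1cond g₃)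
    (R : EReal) (u v u' v' : ℝ → ℝ)
    (hsol : RadialSol n p α f₁ f₂ g₁ g₂ g₃ R u v u' v') :
    ConvexOn ℝ {r : ℝ | 0 < r ∧ (r : EReal) < R} u ∧
    ConvexOn ℝ {r : ℝ | 0 < r ∧ (r : EReal) < R} v ∧
    MonotoneOn u' {r : ℝ | 0 < r ∧ (r : EReal) < R} ∧
    MonotoneOn v' {r : ℝ | 0 < r ∧ (r : EReal) < R} := by
  have hD : {r : ℝ | 0 < r ∧ (r : EReal) < R} ⊆ Ici 0 := fun r hr => hr.1.le
  have hv : ∀ r ∈ {s : ℝ | 0 < s ∧ (s : EReal) < R}, 0 ≤ v r :=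
    fun r hr => (hsol.hvpos r hr.1 hr.2).le
  have hc₁ : ∀ r ∈ {s : ℝ | 0 < s ∧ (s : EReal) < R}, 0 ≤ f₁ r * g₁ (v r) :=
    fun r hr => hf₁.mul_comp_nonneg hg₁ hr.1.le (hv r hr)
  have hc₂ : ∀ r ∈ {s : ℝ | 0 < s ∧ (s : EReal) < R}, 0 ≤ f₂ r * g₂ (v r) * g₃ |u' r| :=
    fun r hr => mul_nonneg (hf₂.mul_comp_nonneg hg₂ hr.1.le (hv r hr)) (hg₃.nonneg (abs_nonneg _))
  have hu' := nonneg_of_radial_flux hp hsol.hu'c hsol.hu'0 hsol.hequ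
    fun r hr => mul_nonneg (hc₁ r hr) (by positivity)
  have hvm := monotoneOn_radial_of_deriv_nonneg hsol.hv
    (nonneg_of_radial_flux hp hsol.hv'c hsol.hv'0 hsol.heqv hc₂)
  have hu'm := monotoneOn_of_radial_flux hp hα hsol.hu'c hsol.hu'0 hsol.hequ
    (hf₁.monotoneOn_mul_comp hg₁ hD hvm hv) hc₁
  have hv'm := monotoneOn_of_radial_flux (α := 0) (c := fun r => f₂ r * g₂ (v r) * g₃ |u' r|)
    hp (by linarith) hsol.hv'c hsol.hv'0 (by simpa only [Real.rpow_zero, mul_one] using hsol.heqv)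
    ((hf₂.monotoneOn_mul_comp hg₂ hD hvm hv).mul
      (hg₃.monotoneOn_comp (hu'm.congr fun r hr => (abs_of_nonneg (hu' r hr)).symm)
        fun _ _ => abs_nonneg _)
      (fun r hr => hf₂.mul_comp_nonneg hg₂ hr.1.le (hv r hr)) fun _ _ => hg₃.nonneg (abs_nonneg _))
    hc₂
  exact ⟨convexOn_radial_of_monotoneOn_deriv hsol.hu hu'm,
    convexOn_radial_of_monotoneOn_deriv hsol.hv hv'm, hu'm, hv'm⟩

/-- Lemma 2.3 (Convexity): u and v are convex on (0,R); equivalently u', v' are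
non-decreasing on (0,R). -/
theorem convexity_of_solutions
    (n : ℕ) (hn : 2 ≤ n) (p α : ℝ) (hp : 1 < p) (hα0 : 0 ≤ α) (hα : α < p - 1)
    (f₁ f₂ g₁ g₂ g₃ : ℝ → ℝ)
    (hf₁ : B1cond f₁) (hf₂ : B1cond f₂) (hg₁ : B1cond g₁) (hg₂ : B1cond g₂) (hg₃ : B1cond g₃)
    (R : EReal) (hR : 0 < R) (u v u' v' : ℝ → ℝ)
    (hsol : RadialSol n p α f₁ f₂ g₁ g₂ g₃ R u v u' v')
    (hunc : NonConstOn R u) (hvnc : NonConstOn R v) :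
    ConvexOn ℝ {r : ℝ | 0 < r ∧ (r : EReal) < R} u ∧
    ConvexOn ℝ {r : ℝ | 0 < r ∧ (r : EReal) < R} v ∧
    MonotoneOn u' {r : ℝ | 0 < r ∧ (r : EReal) < R} ∧
    MonotoneOn v' {r : ℝ | 0 < r ∧ (r : EReal) < R} :=
  convexity_of_solutions_general n p α hp hα f₁ f₂ g₁ g₂ g₃ hf₁ hf₂ hg₁ hg₂ hg₃ R u v u' v' hsol
end
end

section
/- Fix an integer n ≥ 2, reals p > 1, m₁, m₂ ≥ 0, c₁, c₂ > 0, k₁, k₂, k₃ ≥ 0 and α with 0 ≤ α < p−1, and assume (p−1−α)(p−1−k₂) > k₁·k₃. Set λ = [(p−α+m₁)(p−1−k₂) + k₁(p−k₃+m₂)] / [(p−1−α)(p−1−k₂) − k₁k₃] and μ = [(p−1−α)(p+m₂) + k₃(1+m₁)] / [(p−1−α)(p−1−k₂) − k₁k₃]. Then λ > 1 and μ > 1, and there exist unique constants C_λ > 0 and C_μ > 0 such that the functions u₀(r) = C_λ·r^λ and v₀(r) = C_μ·r^μ satisfy, for all r > 0, (d/dr)(r^{n−1}·u₀'(r)^{p−1})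 = r^{n−1}·c₁·r^{m₁}·v₀(r)^{k₁}·u₀'(r)^α and (d/dr)(r^{n−1}·v₀'(r)^{p−1}) = r^{n−1}·c₂·r^{m₂}·v₀(r)^{k₂}·u₀'(r)^{k₃}. Moreover, (λ, μ, C_λ, C_μ) is the unique quadruple of positive reals for which (C_λ·r^λ, C_μ·r^μ) satisfies these two equations for all r > 0. -/
open Set Filter Topology

noncomputable section

/-- The pair (Cl·r^lam, Cm·r^mu) solves the radial system
(d/dr)(r^{n−1}·u₀'(r)^{p−1}) = r^{n−1}·c₁·r^{m₁}·v₀(r)^{k₁}·u₀'(r)^α and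
(d/dr)(r^{n−1}·v₀'(r)^{p−1}) = r^{n−1}·c₂·r^{m₂}·v₀(r)^{k₂}·u₀'(r)^{k₃}
for all r > 0, where u₀'(r) = Cl·lam·r^{lam−1} and v₀'(r) = Cm·mu·r^{mu−1}. -/
def PowerODE (n : ℕ) (p α c₁ c₂ m₁ m₂ k₁ k₂ k₃ lam mu Cl Cm : ℝ) : Prop :=
  ∀ r : ℝ, 0 < r →
    HasDerivAt (fun t : ℝ => t ^ (n - 1) * (Cl * lam * t ^ (lam - 1)) ^ (p - 1))
      (r ^ (n - 1) * (c₁ * r ^ m₁ * (Cm * r ^ mu) ^ k₁ * (Cl * lam * r ^ (lam - 1)) ^ α)) r ∧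
    HasDerivAt (fun t : ℝ => t ^ (n - 1) * (Cm * mu * t ^ (mu - 1)) ^ (p - 1))
      (r ^ (n - 1) * (c₂ * r ^ m₂ * (Cm * r ^ mu) ^ k₂ * (Cl * lam * r ^ (lam - 1)) ^ k₃)) r

/-!
Substituting `u₀ = C_λ r^λ` and `v₀ = C_μ r^μ`, both sides of each equation become constant
multiples of powers of `r`. Matching the exponents gives a linear system for `(λ, μ)`, and matching
the constants gives, after taking logarithms, a linear system for `(log (λ C_λ), log C_μ)`. Both
systems have the matrix `[[p-1-α, -k₁], [-k₃, p-1-k₂]]`, whose determinant is positive by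
assumption, so each has exactly one solution.
-/

open Real

theorem exists_linear_system_iff_eq {a b c d : ℝ} (h : a * d - b * c ≠ 0) (e f : ℝ) :
    ∃ x₀ y₀ : ℝ, ∀ x y : ℝ, a * x + b * y = e ∧ c * x + d * y = f ↔ x = x₀ ∧ y = y₀ := by
  refine ⟨(e * d - b * f) / (a * d - b * c), (a * f - e * c) / (a * d - b * c), fun x y => ?_⟩
  rw [eq_div_iff h, eq_div_iff h]
  constructor
  · rintro ⟨h₁, h₂⟩
    exact ⟨by linear_combination d * h₁ - b * h₂, by linear_combination a * h₂ - c * h₁⟩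
  · rintro ⟨hx, hy⟩
    refine ⟨mul_right_cancel₀ h ?_, mul_right_cancel₀ h ?_⟩
    · linear_combination a * hx + b * hy
    · linear_combination c * hx + d * hy

theorem log_eq_iff_eq_exp {x y : ℝ} (hx : 0 < x) : log x = y ↔ x = exp y :=
  ⟨fun h => h ▸ (exp_log hx).symm, fun h => h ▸ log_exp y⟩

theorem mul_rpow_eq_iff_log_eq {X E c B A q k k' : ℝ} (hX : 0 < X) (hE : 0 < E) (hc : 0 < c)
    (hB : 0 < B) (hA : 0 < A) :
    X ^ q * E = c * B ^ k * A ^ k' ↔ q * log X + log E = log c + k * log B + k' * log A := by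
  rw [← log_injOn_pos.eq_iff (Set.mem_Ioi.2 (by positivity)) (Set.mem_Ioi.2 (by positivity)),
    log_mul (by positivity) hE.ne', log_mul (by positivity) (by positivity),
    log_mul hc.ne' (by positivity), log_rpow hX, log_rpow hB, log_rpow hA]

theorem forall_mul_rpow_eq_iff {K R s f : ℝ} (hR : R ≠ 0) :
    (∀ r : ℝ, 0 < r → K * r ^ s = R * r ^ f) ↔ K = R ∧ s = f := by
  refine ⟨fun h => ?_, fun ⟨hK, hs⟩ _ _ => by rw [hK, hs]⟩
  have hK : K = R := by simpa using h 1 one_pos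
  refine ⟨hK, ?_⟩
  have he := h (exp 1) (exp_pos 1)
  rw [hK, exp_one_rpow, exp_one_rpow] at he
  exact exp_injective (mul_left_cancel₀ hR he)

theorem hasDerivAt_pow_mul_mul_rpow_rpow (N : ℕ) {A : ℝ} (hA : 0 < A) (e q : ℝ) {r : ℝ}
    (hr : 0 < r) :
    HasDerivAt (fun t : ℝ => t ^ N * (A * t ^ e) ^ q)
      (A ^ q * (N + e * q) * r ^ (N + e * q - 1)) r := by
  have hpow : (fun t : ℝ => t ^ N * (A * t ^ e) ^ q) =ᶠ[𝓝 r] fun t => A ^ q * t ^ (N + e * q) := by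
    filter_upwards [Ioi_mem_nhds hr] with t (ht : 0 < t)
    rw [mul_rpow hA.le (rpow_nonneg ht.le e), ← rpow_mul ht.le, rpow_add ht, rpow_natCast]
    ring
  refine (((hasDerivAt_rpow_const (Or.inl hr.ne')).const_mul (A ^ q)).congr_of_eventuallyEq
    hpow).congr_deriv ?_
  ring

theorem pow_mul_mul_rpow_mul_rpow {r : ℝ} (hr : 0 < r) (N : ℕ) {B A : ℝ} (hB : 0 ≤ B)
    (hA : 0 ≤ A) (c m s e k k' : ℝ) :
    r ^ N * (c * r ^ m * (B * r ^ s) ^ k * (A * r ^ e) ^ k') =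
      c * B ^ k * A ^ k' * r ^ (N + m + s * k + e * k') := by
  rw [mul_rpow hB (rpow_nonneg hr.le s), mul_rpow hA (rpow_nonneg hr.le e), ← rpow_mul hr.le,
    ← rpow_mul hr.le, rpow_add hr, rpow_add hr, rpow_add hr, rpow_natCast]
  ring

theorem forall_hasDerivAt_pow_mul_mul_rpow_rpow_iff (N : ℕ) {A B A' c : ℝ} (hA : 0 < A)
    (hB : 0 < B) (hA' : 0 < A') (hc : 0 < c) (e q m s e' k k' : ℝ) :
    (∀ r : ℝ, 0 < r → HasDerivAt (fun t : ℝ => t ^ N * (A * t ^ e) ^ q)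
      (r ^ N * (c * r ^ m * (B * r ^ s) ^ k * (A' * r ^ e') ^ k')) r) ↔
      A ^ q * (N + e * q) = c * B ^ k * A' ^ k' ∧ e * q - 1 = m + s * k + e' * k' := by
  have hderiv : ∀ r : ℝ, 0 < r → (HasDerivAt (fun t : ℝ => t ^ N * (A * t ^ e) ^ q)
      (r ^ N * (c * r ^ m * (B * r ^ s) ^ k * (A' * r ^ e') ^ k')) r ↔
      A ^ q * (N + e * q) * r ^ (N + e * q - 1) =
        c * B ^ k * A' ^ k' * r ^ (N + m + s * k + e' * k')) := fun r hr => by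
    rw [← pow_mul_mul_rpow_mul_rpow hr N hB.le hA'.le]
    exact ⟨(hasDerivAt_pow_mul_mul_rpow_rpow N hA e q hr).unique,
      fun h => h ▸ hasDerivAt_pow_mul_mul_rpow_rpow N hA e q hr⟩
  rw [forall₂_congr hderiv, forall_mul_rpow_eq_iff (by positivity)]
  exact and_congr Iff.rfl ⟨fun h => by linarith, fun h => by linarith⟩

section PowerSolution

variable {n : ℕ} {p α c₁ c₂ m₁ m₂ k₁ k₂ k₃ : ℝ}

theorem powerODE_iff (hc₁ : 0 < c₁) (hc₂ : 0 < c₂) {l m Cl Cm : ℝ} (hl : 0 < l) (hm : 0 < m)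
    (hCl : 0 < Cl) (hCm : 0 < Cm) :
    PowerODE n p α c₁ c₂ m₁ m₂ k₁ k₂ k₃ l m Cl Cm ↔
      ((p - 1 - α) * l + -k₁ * m = p - α + m₁ ∧ -k₃ * l + (p - 1 - k₂) * m = p + m₂ - k₃) ∧
      ((Cl * l) ^ (p - 1) * ((n - 1 : ℕ) + (l - 1) * (p - 1)) = c₁ * Cm ^ k₁ * (Cl * l) ^ α ∧
        (Cm * m) ^ (p - 1) * ((n - 1 : ℕ) + (m - 1) * (p - 1)) = c₂ * Cm ^ k₂ * (Cl * l) ^ k₃) := by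
  have hA := mul_pos hCl hl
  rw [PowerODE, forall₂_and,
    forall_hasDerivAt_pow_mul_mul_rpow_rpow_iff _ hA hCm hA hc₁,
    forall_hasDerivAt_pow_mul_mul_rpow_rpow_iff _ (mul_pos hCm hm) hCm hA hc₂]
  constructor
  · rintro ⟨⟨hc, he⟩, hc', he'⟩
    exact ⟨⟨by linarith, by linarith⟩, hc, hc'⟩
  · rintro ⟨⟨he, he'⟩, hc, hc'⟩
    exact ⟨⟨hc, by linarith⟩, hc', by linarith⟩

theorem exponent_system_iff (hD : (p - 1 - α) * (p - 1 - k₂) - k₁ * k₃ ≠ 0) {lam mu : ℝ}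
    (hlam : lam = ((p - α + m₁) * (p - 1 - k₂) + k₁ * (p - k₃ + m₂)) /
      ((p - 1 - α) * (p - 1 - k₂) - k₁ * k₃))
    (hmu : mu = ((p - 1 - α) * (p + m₂) + k₃ * (1 + m₁)) /
      ((p - 1 - α) * (p - 1 - k₂) - k₁ * k₃)) (l m : ℝ) :
    ((p - 1 - α) * l + -k₁ * m = p - α + m₁ ∧ -k₃ * l + (p - 1 - k₂) * m = p + m₂ - k₃) ↔
      l = lam ∧ m = mu := by
  have hdet : (p - 1 - α) * (p - 1 - k₂) - -k₁ * -k₃ ≠ 0 := by rwa [neg_mul_neg]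
  obtain ⟨l₀, m₀, hsol⟩ := exists_linear_system_iff_eq hdet (p - α + m₁) (p + m₂ - k₃)
  obtain ⟨rfl, rfl⟩ := (hsol lam mu).1 <| by
    rw [hlam, hmu, mul_div_assoc', mul_div_assoc', mul_div_assoc', mul_div_assoc',
      ← add_div, ← add_div, div_eq_iff hD, div_eq_iff hD]
    constructor <;> ring
  exact hsol l m

theorem exists_coefficient_system_iff (hD : (p - 1 - α) * (p - 1 - k₂) - k₁ * k₃ ≠ 0)
    (hc₁ : 0 < c₁) (hc₂ : 0 < c₂) {E₁ E₂ mu : ℝ} (hE₁ : 0 < E₁) (hE₂ : 0 < E₂) (hmu : 0 < mu) :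
    ∃ X₀ Y₀ : ℝ, 0 < X₀ ∧ 0 < Y₀ ∧ ∀ X Y : ℝ, 0 < X → 0 < Y →
      (X ^ (p - 1) * E₁ = c₁ * Y ^ k₁ * X ^ α ∧ (Y * mu) ^ (p - 1) * E₂ = c₂ * Y ^ k₂ * X ^ k₃ ↔
        X = X₀ ∧ Y = Y₀) := by
  have hdet : (p - 1 - α) * (p - 1 - k₂) - -k₁ * -k₃ ≠ 0 := by rwa [neg_mul_neg]
  obtain ⟨s, t, hsol⟩ := exists_linear_system_iff_eq hdet
    (log c₁ - log E₁) (log c₂ - log E₂ - (p - 1) * log mu)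
  refine ⟨exp s, exp t, exp_pos s, exp_pos t, fun X Y hX hY => ?_⟩
  rw [mul_rpow_eq_iff_log_eq hX hE₁ hc₁ hY hX,
    mul_rpow_eq_iff_log_eq (mul_pos hY hmu) hE₂ hc₂ hY hX, log_mul hY.ne' hmu.ne',
    ← log_eq_iff_eq_exp hX, ← log_eq_iff_eq_exp hY, ← hsol]
  constructor <;> rintro ⟨h₁, h₂⟩ <;> constructor <;> linarith

theorem exists_forall_powerODE_iff (hp : 1 < p) (hc₁ : 0 < c₁) (hc₂ : 0 < c₂)
    (hD : (p - 1 - α) * (p - 1 - k₂) - k₁ * k₃ ≠ 0) {lam mu : ℝ}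
    (hlam : lam = ((p - α + m₁) * (p - 1 - k₂) + k₁ * (p - k₃ + m₂)) /
      ((p - 1 - α) * (p - 1 - k₂) - k₁ * k₃))
    (hmu : mu = ((p - 1 - α) * (p + m₂) + k₃ * (1 + m₁)) /
      ((p - 1 - α) * (p - 1 - k₂) - k₁ * k₃)) (hlam1 : 1 < lam) (hmu1 : 1 < mu) :
    ∃ Cl₀ Cm₀ : ℝ, 0 < Cl₀ ∧ 0 < Cm₀ ∧ ∀ l m Cl Cm : ℝ, 0 < l → 0 < m → 0 < Cl → 0 < Cm →
      (PowerODE n p α c₁ c₂ m₁ m₂ k₁ k₂ k₃ l m Cl Cm ↔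
        l = lam ∧ m = mu ∧ Cl = Cl₀ ∧ Cm = Cm₀) := by
  have hlam0 : 0 < lam := one_pos.trans hlam1
  have hE : ∀ l : ℝ, 1 < l → 0 < ((n - 1 : ℕ) : ℝ) + (l - 1) * (p - 1) := fun l hl =>
    add_pos_of_nonneg_of_pos (Nat.cast_nonneg _) (mul_pos (sub_pos.2 hl) (sub_pos.2 hp))
  obtain ⟨X₀, Cm₀, hX₀, hCm₀, hcoef⟩ :=
    exists_coefficient_system_iff hD hc₁ hc₂ (hE lam hlam1) (hE mu hmu1) (one_pos.trans hmu1)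
  refine ⟨X₀ / lam, Cm₀, div_pos hX₀ hlam0, hCm₀, fun l m Cl Cm hl hm hCl hCm => ?_⟩
  rw [powerODE_iff hc₁ hc₂ hl hm hCl hCm, exponent_system_iff hD hlam hmu, eq_div_iff hlam0.ne']
  constructor
  · rintro ⟨⟨rfl, rfl⟩, hc⟩
    exact ⟨rfl, rfl, (hcoef _ _ (mul_pos hCl hl) hCm).1 hc⟩
  · rintro ⟨rfl, rfl, hX, hY⟩
    exact ⟨⟨rfl, rfl⟩, (hcoef _ _ (mul_pos hCl hl) hCm).2 ⟨hX, hY⟩⟩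

theorem one_lt_of_eq_lambda (hp : 1 < p) (hm₁ : 0 ≤ m₁) (hm₂ : 0 ≤ m₂) (hk₁ : 0 ≤ k₁)
    (hk₃ : 0 ≤ k₃) (hα : α < p - 1) (hex : k₁ * k₃ < (p - 1 - α) * (p - 1 - k₂)) {lam : ℝ}
    (hlam : lam = ((p - α + m₁) * (p - 1 - k₂) + k₁ * (p - k₃ + m₂)) /
      ((p - 1 - α) * (p - 1 - k₂) - k₁ * k₃)) : 1 < lam := by
  have hb : 0 < p - 1 - k₂ := pos_of_mul_pos_right ((mul_nonneg hk₁ hk₃).trans_lt hex)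
    (sub_pos.2 hα).le
  rw [hlam, one_lt_div (sub_pos.2 hex)]
  nlinarith [mul_pos (show (0 : ℝ) < 1 + m₁ by linarith) hb,
    mul_nonneg hk₁ (show (0 : ℝ) ≤ p + m₂ by linarith)]

theorem one_lt_of_eq_mu (hm₁ : 0 ≤ m₁) (hm₂ : 0 ≤ m₂) (hk₁ : 0 ≤ k₁) (hk₂ : 0 ≤ k₂)
    (hk₃ : 0 ≤ k₃) (hα : α < p - 1) (hex : k₁ * k₃ < (p - 1 - α) * (p - 1 - k₂)) {mu : ℝ}
    (hmu : mu = ((p - 1 - α) * (p + m₂) + k₃ * (1 + m₁)) /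
      ((p - 1 - α) * (p - 1 - k₂) - k₁ * k₃)) : 1 < mu := by
  rw [hmu, one_lt_div (sub_pos.2 hex)]
  nlinarith [mul_pos (sub_pos.2 hα) (show (0 : ℝ) < 1 + m₂ + k₂ by linarith),
    mul_nonneg hk₃ (show (0 : ℝ) ≤ 1 + m₁ by linarith), mul_nonneg hk₁ hk₃]

end PowerSolution

theorem power_solution_exists_unique_general
    (n : ℕ) (p α m₁ m₂ c₁ c₂ k₁ k₂ k₃ : ℝ)
    (hp : 1 < p) (hm₁ : 0 ≤ m₁) (hm₂ : 0 ≤ m₂) (hc₁ : 0 < c₁) (hc₂ : 0 < c₂)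
    (hk₁ : 0 ≤ k₁) (hk₂ : 0 ≤ k₂) (hk₃ : 0 ≤ k₃)
    (hα : α < p - 1)
    (hex : k₁ * k₃ < (p - 1 - α) * (p - 1 - k₂))
    (lam mu : ℝ)
    (hlam : lam = ((p - α + m₁) * (p - 1 - k₂) + k₁ * (p - k₃ + m₂)) /
      ((p - 1 - α) * (p - 1 - k₂) - k₁ * k₃))
    (hmu : mu = ((p - 1 - α) * (p + m₂) + k₃ * (1 + m₁)) /
      ((p - 1 - α) * (p - 1 - k₂) - k₁ * k₃)) :
    1 < lam ∧ 1 < mu ∧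
    (∃! C : ℝ × ℝ, 0 < C.1 ∧ 0 < C.2 ∧
      PowerODE n p α c₁ c₂ m₁ m₂ k₁ k₂ k₃ lam mu C.1 C.2) ∧
    (∃! Q : ℝ × ℝ × ℝ × ℝ, 0 < Q.1 ∧ 0 < Q.2.1 ∧ 0 < Q.2.2.1 ∧ 0 < Q.2.2.2 ∧
      PowerODE n p α c₁ c₂ m₁ m₂ k₁ k₂ k₃ Q.1 Q.2.1 Q.2.2.1 Q.2.2.2) := by
  have hlam1 := one_lt_of_eq_lambda hp hm₁ hm₂ hk₁ hk₃ hα hex hlam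
  have hmu1 := one_lt_of_eq_mu hm₁ hm₂ hk₁ hk₂ hk₃ hα hex hmu
  have hlam0 : 0 < lam := one_pos.trans hlam1
  have hmu0 : 0 < mu := one_pos.trans hmu1
  obtain ⟨Cl₀, Cm₀, hCl₀, hCm₀, hsol⟩ :=
    exists_forall_powerODE_iff (n := n) hp hc₁ hc₂ (sub_pos.2 hex).ne' hlam hmu hlam1 hmu1
  have hODE := (hsol lam mu Cl₀ Cm₀ hlam0 hmu0 hCl₀ hCm₀).2 ⟨rfl, rfl, rfl, rfl⟩
  refine ⟨hlam1, hmu1, ⟨(Cl₀, Cm₀), ⟨hCl₀, hCm₀, hODE⟩, ?_⟩,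
    ⟨(lam, mu, Cl₀, Cm₀), ⟨hlam0, hmu0, hCl₀, hCm₀, hODE⟩, ?_⟩⟩
  · rintro ⟨Cl, Cm⟩ ⟨hCl, hCm, h⟩
    obtain ⟨-, -, rfl, rfl⟩ := (hsol lam mu Cl Cm hlam0 hmu0 hCl hCm).1 h
    rfl
  · rintro ⟨l, m, Cl, Cm⟩ ⟨hl, hm, hCl, hCm, h⟩
    obtain ⟨rfl, rfl, rfl, rfl⟩ := (hsol l m Cl Cm hl hm hCl hCm).1 h
    rfl

/-- Section 5 of the paper: the limiting system has a unique positive power solution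
(C_λ·r^λ, C_μ·r^μ), with the given exponents λ, μ > 1. -/
theorem power_solution_exists_unique
    (n : ℕ) (hn : 2 ≤ n) (p α m₁ m₂ c₁ c₂ k₁ k₂ k₃ : ℝ)
    (hp : 1 < p) (hm₁ : 0 ≤ m₁) (hm₂ : 0 ≤ m₂) (hc₁ : 0 < c₁) (hc₂ : 0 < c₂)
    (hk₁ : 0 ≤ k₁) (hk₂ : 0 ≤ k₂) (hk₃ : 0 ≤ k₃)
    (hα0 : 0 ≤ α) (hα : α < p - 1)
    (hex : k₁ * k₃ < (p - 1 - α) * (p - 1 - k₂))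
    (lam mu : ℝ)
    (hlam : lam = ((p - α + m₁) * (p - 1 - k₂) + k₁ * (p - k₃ + m₂)) /
      ((p - 1 - α) * (p - 1 - k₂) - k₁ * k₃))
    (hmu : mu = ((p - 1 - α) * (p + m₂) + k₃ * (1 + m₁)) /
      ((p - 1 - α) * (p - 1 - k₂) - k₁ * k₃)) :
    1 < lam ∧ 1 < mu ∧
    (∃! C : ℝ × ℝ, 0 < C.1 ∧ 0 < C.2 ∧
      PowerODE n p α c₁ c₂ m₁ m₂ k₁ k₂ k₃ lam mu C.1 C.2) ∧
    (∃! Q : ℝ × ℝ × ℝ × ℝ, 0 < Q.1 ∧ 0 < Q.2.1 ∧ 0 < Q.2.2.1 ∧ 0 < Q.2.2.2 ∧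
      PowerODE n p α c₁ c₂ m₁ m₂ k₁ k₂ k₃ Q.1 Q.2.1 Q.2.2.1 Q.2.2.2) :=
  power_solution_exists_unique_general n p α m₁ m₂ c₁ c₂ k₁ k₂ k₃ hp hm₁ hm₂ hc₁ hc₂ hk₁ hk₂ hk₃ hα
    hex lam mu hlam hmu
end
end
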